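/- arXiv:1607.02833 — 3 statements merged into one kernel-verified Lean document; each statement's English description precedes it below -/
import Mathlib

section
/- Let x_0,…,x_k be unit vectors spanning a (k+1)-dimensional subspace V of ℝ^(n+1), and let x be a unit vector not antipodal to any x_i. If there exist weights λ ∈ ℝ^(k+1) with Σλ_i ≠ 0 such that Σ_i λ_i log_x(x_i) = 0, then x ∈ V. -/
/-!
If `p` is one of the `xᵢ` there is nothing to prove. Otherwise `-1 < ⟪p,xᵢ⟫ < 1`, so
`log_p(xᵢ) = fᵢ (xᵢ - ⟪p,xᵢ⟫ p)` with `fᵢ = θᵢ / sin θᵢ > 0`, and the barycentric relation reads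
`∑ λᵢ fᵢ xᵢ = c p` with `c = ∑ λᵢ fᵢ ⟪p,xᵢ⟫`. Since the `xᵢ` are linearly independent and some
`λᵢ fᵢ ≠ 0`, the left side is nonzero; hence `c ≠ 0` and `p = c⁻¹ ∑ λᵢ fᵢ xᵢ ∈ V`.
-/

open scoped RealInnerProductSpace

/-- The spherical Riemannian log `log_x(y) = (θ/sinθ)(y - cosθ • x)`,
`θ = arccos ⟪x,y⟫`. -/
noncomputable def sphLog {n : ℕ} (x y : EuclideanSpace ℝ (Fin (n + 1))) :
    EuclideanSpace ℝ (Fin (n + 1)) :=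
  (Real.arccos ⟪x, y⟫ / Real.sin (Real.arccos ⟪x, y⟫)) •
    (y - Real.cos (Real.arccos ⟪x, y⟫) • x)

open Real Submodule

theorem mem_span_of_sum_smul_sub_smul_eq_zero {ι K M : Type*} [Fintype ι] [Field K]
    [AddCommGroup M] [Module K M] {x : ι → M} (hx : LinearIndependent K x) {a t : ι → K}
    (ha : a ≠ 0) {p : M} (h : ∑ i, a i • (x i - t i • p) = 0) :
    p ∈ span K (Set.range x) := by
  simp only [smul_sub, smul_smul, Finset.sum_sub_distrib, sub_eq_zero, ← Finset.sum_smul] at h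
  by_cases hc : ∑ i, a i * t i = 0
  · rw [hc, zero_smul] at h
    exact absurd (funext (Fintype.linearIndependent_iff.mp hx a h)) ha
  · have hp : p = (∑ i, a i * t i)⁻¹ • ∑ i, a i • x i := by
      rw [h, smul_smul, inv_mul_cancel₀ hc, one_smul]
    rw [hp]
    exact smul_mem _ _ (sum_mem fun i _ => smul_mem _ _ (subset_span ⟨i, rfl⟩))

theorem arccos_div_sin_arccos_pos {t : ℝ} (h₁ : -1 < t) (h₂ : t < 1) :
    0 < arccos t / sin (arccos t) :=
  div_pos (arccos_pos.mpr h₂)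
    (sin_pos_of_pos_of_lt_pi (arccos_pos.mpr h₂) (arccos_lt_pi.mpr h₁))

theorem neg_one_lt_real_inner_iff_of_norm_eq_one {F : Type*} [NormedAddCommGroup F]
    [InnerProductSpace ℝ F] {x y : F} (hx : ‖x‖ = 1) (hy : ‖y‖ = 1) :
    -1 < ⟪x, y⟫ ↔ x ≠ -y := by
  rw [← inner_lt_one_iff_real_of_norm_eq_one hx (norm_neg y ▸ hy), inner_neg_right, neg_lt]

theorem sphLog_eq_smul_sub {n : ℕ} {p y : EuclideanSpace ℝ (Fin (n + 1))} (hp : ‖p‖ = 1)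
    (hy : ‖y‖ = 1) :
    sphLog p y = (arccos ⟪p, y⟫ / sin (arccos ⟪p, y⟫)) • (y - ⟪p, y⟫ • p) := by
  obtain ⟨h₁, h₂⟩ := real_inner_mem_Icc_of_norm_eq_one hp hy
  rw [sphLog, cos_arccos h₁ h₂]

/-- If a unit vector `p`, not antipodal to any reference point, admits barycentric
weights `λ` with `Σλ_i ≠ 0` and `Σλ_i log_p(x_i) = 0`, then `p` lies in the
`(k+1)`-dimensional linear span `V` of the reference unit vectors. -/
theorem stmt8 {n k : ℕ} (x : Fin (k + 1) → EuclideanSpace ℝ (Fin (n + 1)))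
    (p : EuclideanSpace ℝ (Fin (n + 1)))
    (hunit : ∀ i, ‖x i‖ = 1) (hp : ‖p‖ = 1)
    (hanti : ∀ i, p ≠ -x i)
    (V : Submodule ℝ (EuclideanSpace ℝ (Fin (n + 1))))
    (hV : V = Submodule.span ℝ (Set.range x))
    (hdim : Module.finrank ℝ V = k + 1)
    (l : Fin (k + 1) → ℝ) (hsum : (∑ i, l i) ≠ 0)
    (hbar : ∑ i, l i • sphLog p (x i) = 0) :
    p ∈ V := by
  subst hV
  by_cases hx : ∃ i, p = x i
  · obtain ⟨i, rfl⟩ := hx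
    exact subset_span ⟨i, rfl⟩
  push Not at hx
  have hli : LinearIndependent ℝ x := by
    rw [linearIndependent_iff_card_eq_finrank_span]
    simpa [Set.finrank] using hdim.symm
  obtain ⟨i, -, hl⟩ := Finset.exists_ne_zero_of_sum_ne_zero hsum
  refine mem_span_of_sum_smul_sub_smul_eq_zero hli
    (a := fun i => l i * (arccos ⟪p, x i⟫ / sin (arccos ⟪p, x i⟫))) (t := fun i => ⟪p, x i⟫)
    (fun ha => ?_) ?_
  · refine mul_ne_zero hl (arccos_div_sin_arccos_pos ?_ ?_).ne' (congrFun ha i)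
    · exact (neg_one_lt_real_inner_iff_of_norm_eq_one hp (hunit i)).mpr (hanti i)
    · exact (inner_lt_one_iff_real_of_norm_eq_one hp (hunit i)).mpr (hx i)
  · simpa only [sphLog_eq_smul_sub hp (hunit _), smul_smul] using hbar
end

section
/- The matrix H = 2uu^T + 2θcot(θ)(Id − xx^T − uu^T), with x a unit vector, u a unit vector orthogonal to x, and θ ∈ (0,π), restricted to the tangent space {v : ⟨v,x⟩=0}, is positive definite if θ < π/2, positive semidefinite with kernel of dimension n−1 if θ = π/2, and indefinite (has a negative eigenvalue) if θ > π/2 and n ≥ 2. -/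
/-! On the tangent space `xᗮ` the quadratic form of `H` is
`2⟪u,v⟫² + c (‖v‖² - ⟪u,v⟫²)` with `c = 2θ cot θ`, and `0 ≤ ‖v‖² - ⟪u,v⟫²`, so its sign on
`xᗮ` is governed by the sign of `cot θ`. For `c = 0` the kernel is `{x, u}ᗮ`, of dimension
`n - 1 ≥ 1`; for `c < 0` any nonzero vector of `{x, u}ᗮ` is a negative direction. -/

open scoped RealInnerProductSpace

open Module Submodule Real

section Orthogonal

variable {E : Type*} [NormedAddCommGroup E] [InnerProductSpace ℝ E]

theorem orthonormal_pair {x u : E} (hx : ‖x‖ = 1) (hu : ‖u‖ = 1) (hxu : ⟪x, u⟫ = 0) :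
    Orthonormal ℝ ![x, u] := by
  simp [orthonormal_iff_ite, Fin.forall_fin_two, hx, hu, hxu, real_inner_comm x u ▸ hxu]

theorem mem_orthogonal_span_pair_iff {x u v : E} :
    v ∈ (span ℝ {x, u})ᗮ ↔ ⟪x, v⟫ = 0 ∧ ⟪u, v⟫ = 0 := by
  rw [span_insert, ← inf_orthogonal, mem_inf, mem_orthogonal_singleton_iff_inner_right,
    mem_orthogonal_singleton_iff_inner_right]

theorem finrank_orthogonal_span_range_of_orthonormal [FiniteDimensional ℝ E] {ι : Type*}
    [Fintype ι] {v : ι → E} (hv : Orthonormal ℝ v) :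
    finrank ℝ (span ℝ (Set.range v))ᗮ = finrank ℝ E - Fintype.card ι := by
  have := (span ℝ (Set.range v)).finrank_add_finrank_orthogonal
  rw [finrank_span_eq_card hv.linearIndependent] at this
  omega

theorem finrank_orthogonal_span_pair [FiniteDimensional ℝ E] {x u : E}
    (hx : ‖x‖ = 1) (hu : ‖u‖ = 1) (hxu : ⟪x, u⟫ = 0) :
    finrank ℝ (span ℝ {x, u})ᗮ = finrank ℝ E - 2 := by
  rw [← Matrix.range_cons_cons_empty x u ![],
    finrank_orthogonal_span_range_of_orthonormal (orthonormal_pair hx hu hxu), Fintype.card_fin]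

end Orthogonal

section Hessian

variable {E : Type*} [NormedAddCommGroup E] [InnerProductSpace ℝ E] {x u v : E} {c : ℝ}

/-- `2uuᵀ + c (Id - xxᵀ - uuᵀ)`; the Hessian of the spherical squared distance is the case
`c = 2θ cot θ`. -/
def sqDistHessian (x u : E) (c : ℝ) (v : E) : E :=
  (2 * ⟪u, v⟫) • u + c • (v - ⟪x, v⟫ • x - ⟪u, v⟫ • u)

theorem inner_self_sqDistHessian (hv : ⟪x, v⟫ = 0) :
    ⟪v, sqDistHessian x u c v⟫ = 2 * ⟪u, v⟫ ^ 2 + c * (‖v‖ ^ 2 - ⟪u, v⟫ ^ 2) := by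
  simp only [sqDistHessian, inner_add_right, inner_sub_right, real_inner_smul_right, hv,
    real_inner_self_eq_norm_sq, real_inner_comm v u]
  ring

theorem inner_self_sqDistHessian_pos (hu : ‖u‖ = 1) (hc : 0 < c) (hv : ⟪x, v⟫ = 0)
    (hv0 : v ≠ 0) : 0 < ⟪v, sqDistHessian x u c v⟫ := by
  have hcs : |⟪u, v⟫| ≤ ‖v‖ := by simpa [hu] using abs_real_inner_le_norm u v
  have hsq : ⟪u, v⟫ ^ 2 ≤ ‖v‖ ^ 2 := sq_le_sq' (abs_le.mp hcs).1 (abs_le.mp hcs).2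
  have hnorm : 0 < ‖v‖ ^ 2 := by positivity
  rw [inner_self_sqDistHessian hv]
  -- the form is at least `min 2 c * ‖v‖²`
  rcases le_total c 2 with h | h <;> nlinarith

theorem inner_self_sqDistHessian_zero_nonneg (hv : ⟪x, v⟫ = 0) :
    0 ≤ ⟪v, sqDistHessian x u 0 v⟫ := by
  rw [inner_self_sqDistHessian hv, zero_mul, add_zero]
  positivity

theorem sqDistHessian_zero_eq_zero_iff (hu : u ≠ 0) :
    sqDistHessian x u 0 v = 0 ↔ ⟪u, v⟫ = 0 := by
  simp [sqDistHessian, hu]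

theorem inner_self_sqDistHessian_neg (hc : c < 0) (hvx : ⟪x, v⟫ = 0) (hvu : ⟪u, v⟫ = 0)
    (hv0 : v ≠ 0) : ⟪v, sqDistHessian x u c v⟫ < 0 := by
  rw [inner_self_sqDistHessian hvx, hvu]
  have : 0 < ‖v‖ ^ 2 := by positivity
  nlinarith

end Hessian

/-- The Hessian `H = 2uuᵀ + 2θcotθ(Id - xxᵀ - uuᵀ)` of the spherical squared
distance at distance `θ`, restricted to the tangent space `{v : ⟪x,v⟫ = 0}`, is
positive definite for `θ < π/2`, positive semidefinite with kernel of dimension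
`n-1` for `θ = π/2`, and indefinite for `θ > π/2` (and `n ≥ 2`). -/
theorem stmt12 {n : ℕ} (hn : 2 ≤ n)
    (x u : EuclideanSpace ℝ (Fin (n + 1)))
    (hx : ‖x‖ = 1) (hu : ‖u‖ = 1) (hxu : ⟪x, u⟫ = 0)
    (θ : ℝ) (hθ0 : 0 < θ) (hθπ : θ < Real.pi)
    (H : EuclideanSpace ℝ (Fin (n + 1)) → EuclideanSpace ℝ (Fin (n + 1)))
    (hH : ∀ v, H v = (2 * ⟪u, v⟫) • u +
        (2 * θ * (Real.cos θ / Real.sin θ)) • (v - ⟪x, v⟫ • x - ⟪u, v⟫ • u)) :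
    (θ < Real.pi / 2 →
        ∀ v : EuclideanSpace ℝ (Fin (n + 1)), ⟪x, v⟫ = 0 → v ≠ 0 → 0 < ⟪v, H v⟫) ∧
    (θ = Real.pi / 2 →
        (∀ v : EuclideanSpace ℝ (Fin (n + 1)), ⟪x, v⟫ = 0 → 0 ≤ ⟪v, H v⟫) ∧
        ∃ K : Submodule ℝ (EuclideanSpace ℝ (Fin (n + 1))),
          (∀ v, v ∈ K ↔ ⟪x, v⟫ = 0 ∧ H v = 0) ∧ Module.finrank ℝ K = n - 1) ∧
    (Real.pi / 2 < θ →
        ∃ v : EuclideanSpace ℝ (Fin (n + 1)), ⟪x, v⟫ = 0 ∧ ⟪v, H v⟫ < 0) := by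
  obtain rfl : H = sqDistHessian x u (2 * θ * (cos θ / sin θ)) := funext hH
  have hsin : 0 < sin θ := sin_pos_of_pos_of_lt_pi hθ0 hθπ
  have hrank : finrank ℝ (span ℝ {x, u})ᗮ = n - 1 := by
    rw [finrank_orthogonal_span_pair hx hu hxu, finrank_euclideanSpace_fin]
    omega
  refine ⟨fun hθ v hv hv0 => ?_, fun hθ => ?_, fun hθ => ?_⟩
  · have hcos : 0 < cos θ := cos_pos_of_mem_Ioo ⟨by linarith [pi_pos], hθ⟩
    exact inner_self_sqDistHessian_pos hu (by positivity) hv hv0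
  · have hu0 : u ≠ 0 := norm_ne_zero_iff.mp (by simp [hu])
    simp only [hθ, cos_pi_div_two, zero_div, mul_zero]
    refine ⟨fun v hv => inner_self_sqDistHessian_zero_nonneg hv, _, fun v => ?_, hrank⟩
    rw [mem_orthogonal_span_pair_iff, sqDistHessian_zero_eq_zero_iff hu0]
  · have hcos : cos θ < 0 := cos_neg_of_pi_div_two_lt_of_lt hθ (by linarith [pi_pos])
    have hc : 2 * θ * (cos θ / sin θ) < 0 :=
      mul_neg_of_pos_of_neg (by positivity) (div_neg_of_neg_of_pos hcos hsin)
    obtain ⟨v, hvK, hv0⟩ := exists_mem_ne_zero_of_ne_bot fun h : (span ℝ {x, u})ᗮ = ⊥ => by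
      rw [h, finrank_bot] at hrank
      omega
    obtain ⟨hvx, hvu⟩ := mem_orthogonal_span_pair_iff.mp hvK
    exact ⟨v, hvx, inner_self_sqDistHessian_neg hc hvx hvu hv0⟩
end

section
/- Let ŷ_1,…,ŷ_N ∈ ℝ^n, ȳ their mean, Σ their empirical covariance matrix with spectral decomposition Σ = Σ_j σ_j² u_j u_j^T, eigenvalues sorted decreasingly with σ_1² > … > σ_{k+1}². Among all flags of affine subspaces V_0 ⊂ V_1 ⊂ … ⊂ V_k with dim V_i = i, the Accumulated Unexplained Variance AUV = Σ_{i=0}^k Σ_{j=1}^N dist(ŷ_j, V_i)² is minimized by the flag V_i = ȳ + Span(u_1,…,u_i), i.e., the flag generated by the first k principal components through the mean. -/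
/-!
The accumulated unexplained variance is a sum over the levels of the flag, and each level
`ȳ + Span(u_1, …, u_i)` is already optimal among all `i`-dimensional affine subspaces.
For an affine subspace through `w` with direction `S`, the squared distance of `y` is
`‖P_{S⊥} (y - w)‖²`; summed over the data it only decreases when `w` is moved to the mean,
where it equals `Σ_j ‖ŷ_j - ȳ‖² - N Σ_l σ_l² ‖P_S u_l‖²`. The weights `‖P_S u_l‖²` lie in
`[0, 1]` and add up to `dim S`, so by the bathtub principle (Ky Fan's maximum principle)
`Σ_l σ_l² ‖P_S u_l‖² ≤ σ_1² + … + σ_i²`, with equality for `S = Span(u_1, …, u_i)`.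
-/

open Finset
open scoped RealInnerProductSpace

theorem sum_mul_le_sum_of_threshold {ι : Type*} [Fintype ι] (A : Finset ι) {σ c : ι → ℝ}
    (t : ℝ) (hA : ∀ i ∈ A, t ≤ σ i) (hAc : ∀ i ∉ A, σ i ≤ t) (hc0 : ∀ i, 0 ≤ c i)
    (hc1 : ∀ i, c i ≤ 1) (hc : ∑ i, c i = #A) :
    ∑ i, σ i * c i ≤ ∑ i ∈ A, σ i := by
  classical
  have hgap : ∑ i ∈ A, σ i - ∑ i, σ i * c i
      = ∑ i, (σ i - t) * ((if i ∈ A then 1 else 0) - c i) := by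
    simp only [mul_sub, mul_ite, mul_one, mul_zero, sum_sub_distrib, sum_ite_mem, univ_inter,
      sub_mul, ← mul_sum, hc, sum_const, nsmul_eq_mul]
    ring
  have hterm : ∀ i, 0 ≤ (σ i - t) * ((if i ∈ A then 1 else 0) - c i) := fun i => by
    by_cases hi : i ∈ A
    · simp only [hi, if_true]
      exact mul_nonneg (sub_nonneg.2 (hA i hi)) (sub_nonneg.2 (hc1 i))
    · simp only [hi, if_false, zero_sub]
      exact mul_nonneg_of_nonpos_of_nonpos (sub_nonpos.2 (hAc i hi)) (neg_nonpos.2 (hc0 i))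
  linarith [hgap, sum_nonneg fun i (_ : i ∈ univ) => hterm i]

theorem Fin.sum_mul_le_sum_val_lt_of_antitone {n d : ℕ} (hd : d ≤ n) {σ c : Fin n → ℝ}
    (hσ : Antitone σ) (hc0 : ∀ i, 0 ≤ c i) (hc1 : ∀ i, c i ≤ 1) (hc : ∑ i, c i = d) :
    ∑ i, σ i * c i ≤ ∑ i ∈ univ.filter (fun i : Fin n ↦ (i : ℕ) < d), σ i := by
  obtain ⟨t, hA, hAc⟩ : ∃ t, (∀ i : Fin n, (i : ℕ) < d → t ≤ σ i) ∧
      ∀ i : Fin n, ¬ (i : ℕ) < d → σ i ≤ t := by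
    by_cases hdn : d < n
    · exact ⟨σ ⟨d, hdn⟩, fun i hi => hσ (Fin.le_def.2 hi.le),
        fun i hi => hσ (Fin.le_def.2 (not_lt.1 hi))⟩
    -- for `d = n` every index lies below `d`, so any lower bound of `σ` is a threshold
    · exact ⟨⨅ i, σ i, fun i _ => ciInf_le (Set.finite_range σ).bddBelow i,
        fun i hi => absurd (i.2.trans_le (not_lt.1 hdn)) hi⟩
  refine sum_mul_le_sum_of_threshold _ t (fun i hi => hA i (by simpa using hi))
    (fun i hi => hAc i (by simpa using hi)) hc0 hc1 ?_
  rw [hc, Fin.card_filter_val_lt, min_eq_right hd]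

section

variable {E : Type*} [NormedAddCommGroup E] [InnerProductSpace ℝ E]

theorem infDist_affineSubspace_eq_norm_starProjection (s : AffineSubspace ℝ E)
    [s.direction.HasOrthogonalProjection] {w : E} (hw : w ∈ s) (x : E) :
    Metric.infDist x s = ‖s.directionᗮ.starProjection (x - w)‖ := by
  have : Nonempty s := ⟨⟨w, hw⟩⟩
  rw [← EuclideanGeometry.dist_orthogonalProjection_eq_infDist,
    EuclideanGeometry.orthogonalProjection_apply_mem s hw, dist_eq_norm,
    Submodule.starProjection_orthogonal_val]
  simp only [vsub_eq_sub, vadd_eq_add, Submodule.coe_orthogonalProjectionOnto_apply]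
  congr 1; abel

theorem sum_norm_add_sq_of_sum_eq_zero {ι : Type*} (s : Finset ι) (a : ι → E) (c : E)
    (ha : ∑ i ∈ s, a i = 0) :
    ∑ i ∈ s, ‖a i + c‖ ^ 2 = ∑ i ∈ s, ‖a i‖ ^ 2 + #s * ‖c‖ ^ 2 := by
  simp only [norm_add_sq_real, sum_add_distrib, ← sum_inner, ha, inner_zero_left, mul_zero,
    ← mul_sum, sum_const, nsmul_eq_mul]
  ring

theorem OrthonormalBasis.norm_starProjection_sq_eq_sum {ι : Type*} [Fintype ι]
    {K : Submodule ℝ E} [K.HasOrthogonalProjection] (b : OrthonormalBasis ι ℝ K) (x : E) :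
    ‖K.starProjection x‖ ^ 2 = ∑ i, ⟪(b i : E), x⟫ ^ 2 := by
  rw [← Submodule.coe_orthogonalProjectionOnto_apply, Submodule.norm_coe,
    ← b.sum_sq_inner_right]
  simp only [Submodule.inner_orthogonalProjectionOnto_eq_of_mem_left]

theorem OrthonormalBasis.sum_norm_starProjection_sq {ι : Type*} [Fintype ι]
    (u : OrthonormalBasis ι ℝ E) (K : Submodule ℝ E) [FiniteDimensional ℝ K] :
    ∑ i, ‖K.starProjection (u i)‖ ^ 2 = Module.finrank ℝ K := by
  let b := stdOrthonormalBasis ℝ K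
  simp only [b.norm_starProjection_sq_eq_sum]
  rw [sum_comm]
  simp [u.sum_sq_inner_left, Submodule.norm_coe, b.orthonormal.1]

theorem sum_norm_starProjection_sq_of_sum_inner_sq {ι κ : Type*} [Fintype ι] [Fintype κ]
    {v : ι → E} {u : κ → E} {μ : κ → ℝ} (hq : ∀ z, ∑ j, ⟪v j, z⟫ ^ 2 = ∑ l, μ l * ⟪u l, z⟫ ^ 2)
    (K : Submodule ℝ E) [FiniteDimensional ℝ K] :
    ∑ j, ‖K.starProjection (v j)‖ ^ 2 = ∑ l, μ l * ‖K.starProjection (u l)‖ ^ 2 := by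
  let b := stdOrthonormalBasis ℝ K
  simp only [b.norm_starProjection_sq_eq_sum, mul_sum]
  rw [sum_comm, sum_comm (s := univ) (t := univ) (f := fun l m => μ l * _)]
  refine sum_congr rfl fun m _ => ?_
  simpa only [real_inner_comm (b m : E)] using hq (b m)

theorem Orthonormal.starProjection_span_image {ι : Type*} {u : ι → E} (hu : Orthonormal ℝ u)
    (T : Set ι) [(Submodule.span ℝ (u '' T)).HasOrthogonalProjection] (i : ι)
    [Decidable (i ∈ T)] :
    (Submodule.span ℝ (u '' T)).starProjection (u i) = if i ∈ T then u i else 0 := by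
  split_ifs with hi
  · exact Submodule.starProjection_eq_self_iff.2 (Submodule.subset_span ⟨i, hi, rfl⟩)
  · have hle : Submodule.span ℝ (u '' T) ≤ (ℝ ∙ u i)ᗮ := Submodule.span_le.2 <| by
      rintro _ ⟨j, hj, rfl⟩
      exact Submodule.mem_orthogonal_singleton_iff_inner_right.2
        (hu.inner_eq_zero fun h => hi (h ▸ hj))
    exact (Submodule.starProjection_apply_eq_zero_iff _).2 ((Submodule.mem_orthogonal' _ _).2
      fun x hx => Submodule.mem_orthogonal_singleton_iff_inner_right.1 (hle hx))

theorem OrthonormalBasis.sum_mul_norm_starProjection_sq_le {n : ℕ}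
    (u : OrthonormalBasis (Fin n) ℝ E) {μ : Fin n → ℝ} (hμ : Antitone μ) (K : Submodule ℝ E)
    [FiniteDimensional ℝ K] :
    ∑ i, μ i * ‖K.starProjection (u i)‖ ^ 2
      ≤ ∑ i ∈ univ.filter (fun i : Fin n ↦ (i : ℕ) < Module.finrank ℝ K), μ i := by
  have : FiniteDimensional ℝ E := .of_basis u.toBasis
  refine Fin.sum_mul_le_sum_val_lt_of_antitone ?_ hμ (fun i => sq_nonneg _) (fun i => ?_)
    (u.sum_norm_starProjection_sq K)
  · simpa [Module.finrank_eq_card_basis u.toBasis] using K.finrank_le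
  · simpa [u.orthonormal.1 i] using K.norm_starProjection_apply_le (u i)

theorem Orthonormal.sum_mul_norm_starProjection_span_image_sq {ι : Type*} [Fintype ι]
    {u : ι → E} (hu : Orthonormal ℝ u) (T : Finset ι) (μ : ι → ℝ)
    [(Submodule.span ℝ (u '' T)).HasOrthogonalProjection] :
    ∑ i, μ i * ‖(Submodule.span ℝ (u '' T)).starProjection (u i)‖ ^ 2 = ∑ i ∈ T, μ i := by
  classical
  simp [hu.starProjection_span_image, apply_ite, hu.1, sum_ite_mem]

theorem sum_norm_starProjection_orthogonal_sq_of_sum_inner_sq {ι κ : Type*} [Fintype ι]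
    [Fintype κ] {v : ι → E} {u : κ → E} {μ : κ → ℝ}
    (hq : ∀ z, ∑ j, ⟪v j, z⟫ ^ 2 = ∑ l, μ l * ⟪u l, z⟫ ^ 2)
    (K : Submodule ℝ E) [FiniteDimensional ℝ K] :
    ∑ j, ‖Kᗮ.starProjection (v j)‖ ^ 2
      = ∑ j, ‖v j‖ ^ 2 - ∑ l, μ l * ‖K.starProjection (u l)‖ ^ 2 := by
  rw [← sum_norm_starProjection_sq_of_sum_inner_sq hq K, ← sum_sub_distrib]
  exact sum_congr rfl fun j _ => eq_sub_of_add_eq' (K.norm_sq_eq_add_norm_sq_starProjection _).symm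

section AffineSubspace

variable {ι κ : Type*} [Fintype ι] [Fintype κ] {y : ι → E} {m : E} {u : κ → E} {μ : κ → ℝ}

theorem sum_infDist_sq_eq_of_mem (hq : ∀ z, ∑ j, ⟪y j - m, z⟫ ^ 2 = ∑ l, μ l * ⟪u l, z⟫ ^ 2)
    (s : AffineSubspace ℝ E) [FiniteDimensional ℝ s.direction] (hm : m ∈ s) :
    ∑ j, Metric.infDist (y j) s ^ 2
      = ∑ j, ‖y j - m‖ ^ 2 - ∑ l, μ l * ‖s.direction.starProjection (u l)‖ ^ 2 := by
  simp only [infDist_affineSubspace_eq_norm_starProjection s hm]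
  exact sum_norm_starProjection_orthogonal_sq_of_sum_inner_sq hq _

theorem le_sum_infDist_sq (hq : ∀ z, ∑ j, ⟪y j - m, z⟫ ^ 2 = ∑ l, μ l * ⟪u l, z⟫ ^ 2)
    (hm : ∑ j, (y j - m) = 0) (s : AffineSubspace ℝ E) [FiniteDimensional ℝ s.direction]
    (hs : (s : Set E).Nonempty) :
    ∑ j, ‖y j - m‖ ^ 2 - ∑ l, μ l * ‖s.direction.starProjection (u l)‖ ^ 2
      ≤ ∑ j, Metric.infDist (y j) s ^ 2 := by
  obtain ⟨w, hw⟩ := hs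
  rw [← sum_norm_starProjection_orthogonal_sq_of_sum_inner_sq hq]
  simp only [infDist_affineSubspace_eq_norm_starProjection s hw]
  set P := s.directionᗮ.starProjection
  have hP : ∑ j, P (y j - m) = 0 := by rw [← map_sum, hm, map_zero]
  calc ∑ j, ‖P (y j - m)‖ ^ 2
      ≤ ∑ j, ‖P (y j - m)‖ ^ 2 + #(univ : Finset ι) * ‖P (m - w)‖ ^ 2 :=
        le_add_of_nonneg_right (by positivity)
    _ = ∑ j, ‖P (y j - m) + P (m - w)‖ ^ 2 := (sum_norm_add_sq_of_sum_eq_zero _ _ _ hP).symm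
    _ = ∑ j, ‖P (y j - w)‖ ^ 2 := by simp only [← map_add, sub_add_sub_cancel]

end AffineSubspace

theorem sum_inner_sq_eq_of_covariance {N : ℕ} {κ : Type*} [Fintype κ] {v : Fin N → E}
    {u : κ → E} {μ : κ → ℝ}
    (h : ∀ z, (N : ℝ)⁻¹ • ∑ j, ⟪v j, z⟫ • v j = ∑ l, (μ l * ⟪u l, z⟫) • u l) (z : E) :
    ∑ j, ⟪v j, z⟫ ^ 2 = ∑ l, N * μ l * ⟪u l, z⟫ ^ 2 := by
  have hz := congrArg (⟪·, z⟫) (h z)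
  simp only [real_inner_smul_left, sum_inner] at hz
  rcases Nat.eq_zero_or_pos N with rfl | hN
  · simp
  · calc ∑ j, ⟪v j, z⟫ ^ 2 = N * ((N : ℝ)⁻¹ * ∑ j, ⟪v j, z⟫ * ⟪v j, z⟫) := by
          rw [← mul_assoc, mul_inv_cancel₀ (by positivity), one_mul]
          simp only [sq]
      _ = _ := by
          rw [hz, mul_sum]
          exact sum_congr rfl fun l _ => by ring

theorem sum_sub_inv_smul_sum_eq_zero {N : ℕ} (y : Fin N → E) :
    ∑ j, (y j - (N : ℝ)⁻¹ • ∑ i, y i) = 0 := by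
  rcases Nat.eq_zero_or_pos N with rfl | hN
  · simp
  · rw [sum_sub_distrib, sum_const, card_univ, Fintype.card_fin, ← Nat.cast_smul_eq_nsmul ℝ,
      smul_smul, mul_inv_cancel₀ (by positivity), one_smul, sub_self]

end

theorem stmt15_general {n k N : ℕ}
    (y : Fin N → EuclideanSpace ℝ (Fin n))
    (ybar : EuclideanSpace ℝ (Fin n)) (hybar : ybar = (N : ℝ)⁻¹ • ∑ j, y j)
    (u : Fin n → EuclideanSpace ℝ (Fin n)) (σ : Fin n → ℝ)
    (horth : Orthonormal ℝ u)
    (hspec : ∀ z, (N : ℝ)⁻¹ • ∑ j, ⟪y j - ybar, z⟫ • (y j - ybar)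
        = ∑ i, (σ i ^ 2 * ⟪u i, z⟫) • u i)
    (hsorted : ∀ i j : Fin n, i < j → σ j ^ 2 ≤ σ i ^ 2)
    (V : Fin (k + 1) → AffineSubspace ℝ (EuclideanSpace ℝ (Fin n)))
    (hV : ∀ i, V i = AffineSubspace.mk' ybar
        (Submodule.span ℝ {e | ∃ j : Fin n, (j : ℕ) < (i : ℕ) ∧ e = u j}))
    (W : Fin (k + 1) → AffineSubspace ℝ (EuclideanSpace ℝ (Fin n)))
    (hWne : ∀ i, (W i : Set (EuclideanSpace ℝ (Fin n))).Nonempty)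
    (hWdim : ∀ i, Module.finrank ℝ (W i).direction = (i : ℕ)) :
    ∑ i, ∑ j, Metric.infDist (y j) (V i : Set (EuclideanSpace ℝ (Fin n))) ^ 2
      ≤ ∑ i, ∑ j, Metric.infDist (y j) (W i : Set (EuclideanSpace ℝ (Fin n))) ^ 2 := by
  obtain ⟨U, hU⟩ := Orthonormal.exists_orthonormalBasis_extension_of_card_eq (s := Set.univ)
    (by simp) (horth.comp _ Subtype.val_injective)
  have hUu : ⇑U = u := funext fun i => hU i trivial
  have hq := sum_inner_sq_eq_of_covariance hspec
  have hmean : ∑ j, (y j - ybar) = 0 := hybar ▸ sum_sub_inv_smul_sum_eq_zero y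
  have hμ : Antitone fun l => (N : ℝ) * σ l ^ 2 :=
    antitone_iff_forall_lt.2 fun i j hij =>
      mul_le_mul_of_nonneg_left (hsorted i j hij) N.cast_nonneg
  refine sum_le_sum fun p _ => ?_
  set A := univ.filter (fun l : Fin n ↦ (l : ℕ) < p)
  have hVdir : (V p).direction = Submodule.span ℝ (u '' A) := by
    rw [hV p, AffineSubspace.direction_mk']
    congr 1; ext e; simp [A, eq_comm]
  calc ∑ j, Metric.infDist (y j) (V p : Set (EuclideanSpace ℝ (Fin n))) ^ 2
      = ∑ j, ‖y j - ybar‖ ^ 2 - ∑ l ∈ A, N * σ l ^ 2 := by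
        rw [sum_infDist_sq_eq_of_mem hq _ (hV p ▸ AffineSubspace.self_mem_mk' _ _), hVdir,
          horth.sum_mul_norm_starProjection_span_image_sq]
    _ ≤ ∑ j, ‖y j - ybar‖ ^ 2 - ∑ l, N * σ l ^ 2 * ‖(W p).direction.starProjection (u l)‖ ^ 2 := by
        gcongr
        have hKyFan := U.sum_mul_norm_starProjection_sq_le hμ (W p).direction
        rwa [hUu, hWdim p] at hKyFan
    _ ≤ _ := le_sum_infDist_sq hq hmean _ (hWne p)

/-- Euclidean PCA optimizes the Accumulated Unexplained Variance (AUV) criterion: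
among all flags of nonempty nested affine subspaces `W_0 ⊂ … ⊂ W_k` of `ℝ^n` with
`dim W_i = i`, the flag `V_i = ȳ + Span(u_1,…,u_i)` through the mean spanned by the
first principal components minimizes `AUV = Σ_{i=0}^k Σ_j dist(ŷ_j, ·_i)²`, assuming
the first `k+1` eigenvalues of the empirical covariance are simple (strictly sorted). -/
theorem stmt15 {n k N : ℕ} (hk : k + 1 ≤ n) (hN : 0 < N)
    (y : Fin N → EuclideanSpace ℝ (Fin n))
    (ybar : EuclideanSpace ℝ (Fin n)) (hybar : ybar = (N : ℝ)⁻¹ • ∑ j, y j)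
    (u : Fin n → EuclideanSpace ℝ (Fin n)) (σ : Fin n → ℝ)
    (horth : Orthonormal ℝ u)
    (hspec : ∀ z, (N : ℝ)⁻¹ • ∑ j, ⟪y j - ybar, z⟫ • (y j - ybar)
        = ∑ i, (σ i ^ 2 * ⟪u i, z⟫) • u i)
    (hsorted : ∀ i j : Fin n, i < j → σ j ^ 2 ≤ σ i ^ 2)
    (hstrict : ∀ i j : Fin n, i < j → (j : ℕ) ≤ k → σ j ^ 2 < σ i ^ 2)
    (V : Fin (k + 1) → AffineSubspace ℝ (EuclideanSpace ℝ (Fin n)))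
    (hV : ∀ i, V i = AffineSubspace.mk' ybar
        (Submodule.span ℝ {e | ∃ j : Fin n, (j : ℕ) < (i : ℕ) ∧ e = u j}))
    (W : Fin (k + 1) → AffineSubspace ℝ (EuclideanSpace ℝ (Fin n)))
    (hWne : ∀ i, (W i : Set (EuclideanSpace ℝ (Fin n))).Nonempty)
    (hWnested : ∀ i j, i ≤ j → W i ≤ W j)
    (hWdim : ∀ i, Module.finrank ℝ (W i).direction = (i : ℕ)) :
    ∑ i, ∑ j, Metric.infDist (y j) (V i : Set (EuclideanSpace ℝ (Fin n))) ^ 2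
      ≤ ∑ i, ∑ j, Metric.infDist (y j) (W i : Set (EuclideanSpace ℝ (Fin n))) ^ 2 :=
  stmt15_general y ybar hybar u σ horth hspec hsorted V hV W hWne hWdim
end
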